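/- Let Ω be a bounded open subset of ℂ^d and let S be a set of holomorphic functions from Ω to the open unit disk 𝔻. Let T be a generic matrix d-tuple on Ω with eigenvector basis v_1,…,v_n of ℂ^n and distinct joint eigenvalues λ_1,…,λ_n ∈ Ω, and suppose ‖ψ(T)‖ ≤ 1 for every ψ ∈ S. Define k : Ω × Ω → ℂ by k(λ_i, λ_j) = ⟨v_i, v_j⟩ for 1 ≤ i, j ≤ n, and k(z, w) = 0 whenever z or w is not among λ_1,…,λ_n. Then k ∈ K_S, taking X = Ω. -/

import Mathlib

open scoped ComplexConjugate

noncomputable section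

/-- A generic matrix `d`-tuple on `Ω`: a `d`-tuple of commuting `n × n` matrices having a
basis of joint eigenvectors `v j` with distinct joint eigenvalues `lam j ∈ Ω`.  Such a tuple
is completely determined by the eigendata `(n, lam, v)`. -/
structure GenTuple (d : ℕ) (Ω : Set (Fin d → ℂ)) where
  n : ℕ
  npos : 0 < n
  lam : Fin n → (Fin d → ℂ)
  v : Fin n → (Fin n → ℂ)
  indep : LinearIndependent ℂ v
  inj : Function.Injective lam
  mem : ∀ j, lam j ∈ Ω

namespace GenTuple

variable {d : ℕ} {Ω : Set (Fin d → ℂ)}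

/-- The matrix whose columns are the eigenvectors `v j`. -/
def P (T : GenTuple d Ω) : Matrix (Fin T.n) (Fin T.n) ℂ :=
  Matrix.of fun i j => T.v j i

/-- `φ(T)`: the unique matrix with `φ(T) vⱼ = φ(λⱼ) vⱼ` for all `j`. -/
def evalM (T : GenTuple d Ω) (φ : (Fin d → ℂ) → ℂ) : Matrix (Fin T.n) (Fin T.n) ℂ :=
  T.P * Matrix.diagonal (fun j => φ (T.lam j)) * T.P⁻¹

/-- `‖φ(T)‖`, the operator norm of `φ(T)` on the Euclidean space `ℂ^n`. -/
def opNorm (T : GenTuple d Ω) (φ : (Fin d → ℂ) → ℂ) : ℝ :=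
  ‖Matrix.toEuclideanCLM (𝕜 := ℂ) (T.evalM φ)‖

end GenTuple

/-- The set of values `‖φ(T)‖` as `T` ranges over the class `𝒞`. -/
def normSet {d : ℕ} {Ω : Set (Fin d → ℂ)} (𝒞 : Set (GenTuple d Ω))
    (φ : (Fin d → ℂ) → ℂ) : Set ℝ :=
  (fun T : GenTuple d Ω => T.opNorm φ) '' 𝒞

/-- `‖φ‖_𝒞 = sup_{T ∈ 𝒞} ‖φ(T)‖`. -/
def cNorm {d : ℕ} {Ω : Set (Fin d → ℂ)} (𝒞 : Set (GenTuple d Ω))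
    (φ : (Fin d → ℂ) → ℂ) : ℝ :=
  sSup (normSet 𝒞 φ)

/-- `φ ∈ H^∞(𝒞)`: `φ` is holomorphic on `Ω` and `‖φ‖_𝒞 < ∞`. -/
def MemHinf {d : ℕ} (Ω : Set (Fin d → ℂ)) (𝒞 : Set (GenTuple d Ω))
    (φ : (Fin d → ℂ) → ℂ) : Prop :=
  DifferentiableOn ℂ φ Ω ∧ BddAbove (normSet 𝒞 φ)

/-- `𝒞` is subordinate to `Ω`: `𝒞` is nonempty and contains, for every `λ ∈ Ω`, the
`1 × 1` tuple `(λ¹, …, λᵈ)`. -/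
def Subordinate {d : ℕ} (Ω : Set (Fin d → ℂ)) (𝒞 : Set (GenTuple d Ω)) : Prop :=
  𝒞.Nonempty ∧ ∀ lam ∈ Ω, ∃ T ∈ 𝒞, T.n = 1 ∧ ∀ j, T.lam j = lam

open scoped ComplexOrder

/-- A kernel `k` is positive on the set `X`: for all finite lists of points of `X` and all
scalars `c`, `Σᵢⱼ cᵢ conj(cⱼ) k(zᵢ, zⱼ) ≥ 0`. -/
def IsPosKernelOn {α : Type*} (X : Set α) (k : α → α → ℂ) : Prop :=
  ∀ (m : ℕ) (z : Fin m → α), (∀ i, z i ∈ X) → ∀ c : Fin m → ℂ,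
    0 ≤ ∑ i, ∑ j, c i * conj (c j) * k (z i) (z j)

/-- `k ∈ K_S` (with `X` the underlying set): `(z,w) ↦ (1 − ψ(z) conj(ψ(w))) k(z,w)` is a
positive kernel for every `ψ ∈ S`. -/
def MemKS {α : Type*} (X : Set α) (S : Set (α → ℂ)) (k : α → α → ℂ) : Prop :=
  ∀ ψ ∈ S, IsPosKernelOn X (fun z w => (1 - ψ z * conj (ψ w)) * k z w)

open scoped InnerProductSpace Matrix

section GramKernel

variable {𝕜 E ι : Type*} [RCLike 𝕜] [NormedAddCommGroup E] [InnerProductSpace 𝕜 E] [Fintype ι]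

theorem sum_mul_conj_mul_inner_eq (c : ι → 𝕜) (p : ι → E) :
    ∑ i, ∑ j, c i * conj (c j) * ⟪p j, p i⟫_𝕜 = ⟪∑ j, c j • p j, ∑ i, c i • p i⟫_𝕜 := by
  simp only [sum_inner, inner_sum, inner_smul_left, inner_smul_right, Finset.mul_sum]
  refine Finset.sum_congr rfl fun i _ => Finset.sum_congr rfl fun j _ => ?_
  ring

/-- The quadratic form is `‖u‖² - ‖A u‖²` with `u = Σ cᵢ pᵢ`. -/
theorem sum_mul_conj_mul_one_sub_mul_inner_nonneg {A : E →L[𝕜] E} (hA : ‖A‖ ≤ 1)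
    {μ : ι → 𝕜} {p : ι → E} (hp : ∀ i, A (p i) = μ i • p i) (c : ι → 𝕜) :
    0 ≤ ∑ i, ∑ j, c i * conj (c j) * ((1 - μ i * conj (μ j)) * ⟪p j, p i⟫_𝕜) := by
  set u := ∑ i, c i • p i
  have hAu : A u = ∑ i, (c i * μ i) • p i := by
    simp only [u, map_sum, map_smul, hp, smul_smul]
  have hsplit : ∑ i, ∑ j, c i * conj (c j) * ((1 - μ i * conj (μ j)) * ⟪p j, p i⟫_𝕜)
      = ⟪u, u⟫_𝕜 - ⟪A u, A u⟫_𝕜 := by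
    rw [hAu, ← sum_mul_conj_mul_inner_eq, ← sum_mul_conj_mul_inner_eq]
    simp only [← Finset.sum_sub_distrib, map_mul]
    refine Finset.sum_congr rfl fun i _ => Finset.sum_congr rfl fun j _ => ?_
    ring
  have hcontr : ‖A u‖ ≤ ‖u‖ := A.le_of_opNorm_le hA u |>.trans_eq (one_mul _)
  rw [hsplit, inner_self_eq_norm_sq_to_K, inner_self_eq_norm_sq_to_K, sub_nonneg]
  exact_mod_cast pow_le_pow_left₀ (norm_nonneg _) hcontr 2

end GramKernel

namespace GenTuple

variable {d : ℕ} {Ω : Set (Fin d → ℂ)}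

theorem isUnit_P (T : GenTuple d Ω) : IsUnit T.P :=
  Matrix.linearIndependent_cols_iff_isUnit.mp T.indep

theorem evalM_mulVec_v (T : GenTuple d Ω) (φ : (Fin d → ℂ) → ℂ) (j : Fin T.n) :
    T.evalM φ *ᵥ T.v j = φ (T.lam j) • T.v j := by
  have hv : T.v j = T.P *ᵥ Pi.single j 1 := by
    ext i
    simp [Matrix.mulVec_single, P]
  rw [hv, evalM, Matrix.mulVec_mulVec, Matrix.mul_assoc, Matrix.mul_assoc,
    Matrix.nonsing_inv_mul _ ((Matrix.isUnit_iff_isUnit_det _).mp T.isUnit_P), Matrix.mul_one,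
    ← Matrix.mulVec_mulVec, Matrix.mulVec_single, Matrix.mulVec_smul]
  simp

def eigvecAt (T : GenTuple d Ω) : (Fin d → ℂ) → EuclideanSpace ℂ (Fin T.n) :=
  Function.extend T.lam (fun j => WithLp.toLp 2 (T.v j)) 0

theorem eigvecAt_lam (T : GenTuple d Ω) (j : Fin T.n) :
    T.eigvecAt (T.lam j) = WithLp.toLp 2 (T.v j) :=
  T.inj.extend_apply _ _ j

theorem eigvecAt_of_notMem_range (T : GenTuple d Ω) {z : Fin d → ℂ}
    (hz : z ∉ Set.range T.lam) : T.eigvecAt z = 0 :=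
  Function.extend_apply' _ _ z hz

theorem toEuclideanCLM_evalM_eigvecAt (T : GenTuple d Ω) (φ : (Fin d → ℂ) → ℂ)
    (z : Fin d → ℂ) :
    Matrix.toEuclideanCLM (𝕜 := ℂ) (T.evalM φ) (T.eigvecAt z) = φ z • T.eigvecAt z := by
  by_cases hz : z ∈ Set.range T.lam
  · obtain ⟨j, rfl⟩ := hz
    rw [eigvecAt_lam, Matrix.toEuclideanCLM_toLp, evalM_mulVec_v, WithLp.toLp_smul]
  · simp [eigvecAt_of_notMem_range T hz]

theorem eq_inner_eigvecAt (T : GenTuple d Ω) {k : (Fin d → ℂ) → (Fin d → ℂ) → ℂ}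
    (hkeig : ∀ i j, k (T.lam i) (T.lam j) = ∑ m, T.v i m * conj (T.v j m))
    (hkzero : ∀ z w, z ∉ Set.range T.lam ∨ w ∉ Set.range T.lam → k z w = 0) (z w : Fin d → ℂ) :
    k z w = ⟪T.eigvecAt w, T.eigvecAt z⟫_ℂ := by
  by_cases hz : z ∈ Set.range T.lam
  · by_cases hw : w ∈ Set.range T.lam
    · obtain ⟨i, rfl⟩ := hz
      obtain ⟨j, rfl⟩ := hw
      simp [hkeig, eigvecAt_lam, PiLp.inner_apply]
    · simp [hkzero z w (Or.inr hw), eigvecAt_of_notMem_range T hw]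
  · simp [hkzero z w (Or.inl hz), eigvecAt_of_notMem_range T hz]

end GenTuple

theorem stmt6_general {d : ℕ} (Ω : Set (Fin d → ℂ))
    (S : Set ((Fin d → ℂ) → ℂ))
    (T : GenTuple d Ω) (hT : ∀ ψ ∈ S, T.opNorm ψ ≤ 1)
    (k : (Fin d → ℂ) → (Fin d → ℂ) → ℂ)
    (hkeig : ∀ i j, k (T.lam i) (T.lam j) = ∑ m, T.v i m * conj (T.v j m))
    (hkzero : ∀ z w, z ∉ Set.range T.lam ∨ w ∉ Set.range T.lam → k z w = 0) :
    MemKS Ω S k := by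
  intro ψ hψ m z _ c
  simp only [T.eq_inner_eigvecAt hkeig hkzero]
  exact sum_mul_conj_mul_one_sub_mul_inner_nonneg (hT ψ hψ)
    (fun i => T.toEuclideanCLM_evalM_eigvecAt ψ (z i)) c

/-- the kernel supported on the joint eigenvalues of a generic tuple `T`
satisfying `‖ψ(T)‖ ≤ 1` for all `ψ ∈ S`, with `k(λᵢ, λⱼ) = ⟨vᵢ, vⱼ⟩`, belongs to `K_S`. -/
theorem stmt6 {d : ℕ} (Ω : Set (Fin d → ℂ)) (hΩopen : IsOpen Ω)
    (hΩbdd : Bornology.IsBounded Ω)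
    (S : Set ((Fin d → ℂ) → ℂ))
    (hShol : ∀ ψ ∈ S, DifferentiableOn ℂ ψ Ω)
    (hSD : ∀ ψ ∈ S, ∀ z ∈ Ω, ‖ψ z‖ < 1)
    (T : GenTuple d Ω) (hT : ∀ ψ ∈ S, T.opNorm ψ ≤ 1)
    (k : (Fin d → ℂ) → (Fin d → ℂ) → ℂ)
    (hkeig : ∀ i j, k (T.lam i) (T.lam j) = ∑ m, T.v i m * conj (T.v j m))
    (hkzero : ∀ z w, z ∉ Set.range T.lam ∨ w ∉ Set.range T.lam → k z w = 0) :
    MemKS Ω S k :=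
  stmt6_general Ω S T hT k hkeig hkzero
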